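/- arXiv:0901.2244 — 7 statements merged into one kernel-verified Lean document; each statement's English description precedes it below -/
import Mathlib

section
/- Let H be a complex Hilbert space, U a unitary operator on H, and e ∈ H a vector such that the linear span of {U^k e : k ∈ ℤ} is dense in H. Then U^n converges to 0 in the weak operator topology as n → ∞ (i.e., ⟨φ, U^n χ⟩ → 0 for all φ, χ ∈ H) if and only if ⟨e, U^n e⟩ → 0 as n → ∞. -/
/-!
Since `U` is unitary, `⟨U^j e, U^n (U^k e)⟩ = ⟨e, U^(n + k - j) e⟩`, so decay of the moments
gives decay of `⟨φ, U^n χ⟩` whenever `φ` and `χ` are among the vectors `U^k e`. With one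
argument fixed, the functionals `⟨φ, U^n ·⟩` (resp. `⟨·, U^n χ⟩`) are uniformly Lipschitz, so
the vectors along which they tend to `0` form a closed subspace; it contains the `U^k e`, hence
everything by cyclicity. This is applied first in `χ`, then in `φ`.
-/

open Filter Topology

section TendstoZero

variable {ι R R₂ E F : Type*} [Semiring R] [Semiring R₂] {σ : R →+* R₂}
  [AddCommMonoid E] [Module R E] [AddCommMonoid F] [Module R₂ F]

def LinearMap.tendstoZeroSubmodule [TopologicalSpace F] [ContinuousAdd F]
    [ContinuousConstSMul R₂ F] (f : ι → E →ₛₗ[σ] F) (l : Filter ι) : Submodule R E where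
  carrier := {x | Tendsto (fun i => f i x) l (𝓝 0)}
  zero_mem' := by simpa using tendsto_const_nhds
  add_mem' hx hy := by simpa using hx.add hy
  smul_mem' c x hx := by simpa using hx.const_smul (σ c)

variable [TopologicalSpace E] [UniformSpace F] [ContinuousAdd F] [ContinuousConstSMul R₂ F]

theorem LinearMap.isClosed_tendstoZeroSubmodule {f : ι → E →ₛₗ[σ] F}
    (hf : Equicontinuous fun i => ⇑(f i)) (l : Filter ι) :
    IsClosed (LinearMap.tendstoZeroSubmodule f l : Set E) :=
  hf.isClosed_setOfPred_tendsto continuous_const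

theorem LinearMap.tendsto_zero_of_dense_span {f : ι → E →ₛₗ[σ] F} {l : Filter ι}
    (hf : Equicontinuous fun i => ⇑(f i)) {s : Set E} (hs : Dense (Submodule.span R s : Set E))
    (h : ∀ x ∈ s, Tendsto (fun i => f i x) l (𝓝 0)) (x : E) :
    Tendsto (fun i => f i x) l (𝓝 0) :=
  (isClosed_tendstoZeroSubmodule hf l).closure_subset_iff.mpr
    (Submodule.span_le.mpr h : Submodule.span R s ≤ tendstoZeroSubmodule f l) (hs x)

end TendstoZero

section Inner

variable {𝕜 E : Type*} [RCLike 𝕜] [SeminormedAddCommGroup E] [InnerProductSpace 𝕜 E]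

theorem lipschitzWith_inner_left (y : E) : LipschitzWith ‖y‖₊ fun x => (inner 𝕜 x y : 𝕜) :=
  LipschitzWith.of_dist_le_mul fun x x' => by
    simpa [dist_eq_norm, ← inner_sub_left, mul_comm] using norm_inner_le_norm (𝕜 := 𝕜) (x - x') y

theorem lipschitzWith_inner_right (x : E) : LipschitzWith ‖x‖₊ fun y => (inner 𝕜 x y : 𝕜) :=
  LipschitzWith.of_dist_le_mul fun y y' => by
    simpa [dist_eq_norm, ← inner_sub_right] using norm_inner_le_norm (𝕜 := 𝕜) x (y - y')

theorem LinearIsometryEquiv.inner_zpow_apply_zpow_apply (U : E ≃ₗᵢ[𝕜] E) (x y : E) (j k : ℤ) :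
    inner 𝕜 ((U ^ j) x) ((U ^ k) y) = inner 𝕜 x ((U ^ (k - j)) y) := by
  rw [← add_sub_cancel j k, zpow_add, LinearIsometryEquiv.coe_mul, Function.comp_apply,
    LinearIsometryEquiv.inner_map_map, add_sub_cancel]

end Inner

theorem weak_limit_zero_iff_moment_zero_general
    {H : Type*} [NormedAddCommGroup H] [InnerProductSpace ℂ H]
    (U : H ≃ₗᵢ[ℂ] H) (e : H)
    (hcyc : Dense ((Submodule.span ℂ (Set.range fun k : ℤ => (U ^ k) e) : Submodule ℂ H) : Set H)) :
    (∀ φ χ : H, Tendsto (fun n : ℕ => (inner ℂ φ ((U ^ n) χ) : ℂ)) atTop (𝓝 0)) ↔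
      Tendsto (fun n : ℕ => (inner ℂ e ((U ^ n) e) : ℂ)) atTop (𝓝 0) := by
  refine ⟨fun h => h e e, fun hmom => ?_⟩
  have hmomZ : Tendsto (fun m : ℤ => (inner ℂ e ((U ^ m) e) : ℂ)) atTop (𝓝 0) := by
    simpa [← Nat.map_cast_int_atTop, Function.comp_def] using hmom
  have hgen : ∀ j k : ℤ,
      Tendsto (fun n : ℕ => (inner ℂ ((U ^ j) e) ((U ^ n) ((U ^ k) e)) : ℂ)) atTop (𝓝 0) := by
    intro j k
    have hshift := tendsto_atTop_add_const_right atTop (k - j) tendsto_natCast_atTop_atTop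
    refine (hmomZ.comp hshift).congr fun n => ?_
    rw [Function.comp_apply, ← zpow_natCast, ← Function.comp_apply (f := ⇑(U ^ (n : ℤ))),
      ← LinearIsometryEquiv.coe_mul, ← zpow_add, U.inner_zpow_apply_zpow_apply, add_sub_assoc]
  have hright : ∀ (j : ℤ) (χ : H),
      Tendsto (fun n : ℕ => (inner ℂ ((U ^ j) e) ((U ^ n) χ) : ℂ)) atTop (𝓝 0) := by
    intro j
    refine LinearMap.tendsto_zero_of_dense_span
      (f := fun n : ℕ => (innerₛₗ ℂ ((U ^ j) e)).comp (U ^ n).toLinearMap) ?_ hcyc ?_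
    · exact (LipschitzWith.uniformEquicontinuous _ _ fun n =>
        (lipschitzWith_inner_right ((U ^ j) e)).comp (U ^ n).lipschitz).equicontinuous
    · rintro _ ⟨k, rfl⟩
      exact hgen j k
  intro φ χ
  refine LinearMap.tendsto_zero_of_dense_span
    (f := fun n : ℕ => (innerₛₗ ℂ).flip ((U ^ n) χ)) ?_ hcyc ?_ φ
  · exact (LipschitzWith.uniformEquicontinuous _ ‖χ‖₊ fun n =>
        (lipschitzWith_inner_left ((U ^ n) χ)).weaken ((U ^ n).nnnorm_map χ).le).equicontinuous
  · rintro _ ⟨j, rfl⟩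
    exact hright j χ

/-- For a unitary `U` on a complex Hilbert space with cyclic vector `e`
(the span of `{U^k e : k ∈ ℤ}` is dense), `U^n → 0` in the weak operator
topology iff `⟨e, U^n e⟩ → 0`. -/
theorem weak_limit_zero_iff_moment_zero
    {H : Type*} [NormedAddCommGroup H] [InnerProductSpace ℂ H] [CompleteSpace H]
    (U : H ≃ₗᵢ[ℂ] H) (e : H)
    (hcyc : Dense ((Submodule.span ℂ (Set.range fun k : ℤ => (U ^ k) e) : Submodule ℂ H) : Set H)) :
    (∀ φ χ : H, Tendsto (fun n : ℕ => (inner ℂ φ ((U ^ n) χ) : ℂ)) atTop (𝓝 0)) ↔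
      Tendsto (fun n : ℕ => (inner ℂ e ((U ^ n) e) : ℂ)) atTop (𝓝 0) :=
  weak_limit_zero_iff_moment_zero_general U e hcyc
end

section
/- Let H be a complex Hilbert space, U a unitary operator on H, and e ∈ H a vector such that the linear span of {U^k e : k ∈ ℤ} is dense in H. Let (θ_n) be a sequence of real numbers. Then the operators e^{−iθ_n} U^n converge in the weak operator topology to a nonzero limit if and only if both: (a) e^{−iθ_n} ⟨e, U^n e⟩ converges to a nonzero limit, and (b) the sequence e^{i(θ_{n+1} − θ_n)} converges. -/
/-!
Write `T n = e^{-iθ_n} U^n`. Everything rests on the recurrence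
`⟪x, T n (U^(m+1) y)⟫ = e^{i(θ_{n+1} - θ_n)} ⟪x, T (n+1) (U^m y)⟫`.

If `T n → A ≠ 0` weakly, then `⟪e, A e⟫ ≠ 0`: otherwise the recurrence, taken in absolute value,
makes every coefficient `⟪U^a e, A (U^b e)⟫` vanish, and cyclicity of `e` forces `A = 0`. The phase
ratios then converge to `⟪e, A (U e)⟫ / ⟪e, A e⟫`.

Conversely, if the moments converge to `L ≠ 0` and the phase ratios to `w` (so `|w| = 1`), the
recurrence gives `⟪U^a e, T n (U^b e)⟫ → w^(b-a) L`. As `‖T n‖ ≤ 1` and the `U^k e` span a dense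
subspace, `⟪φ, T n χ⟫` is Cauchy for all `φ, χ`; the limiting bounded sesquilinear form is
represented by an operator `A`, and `⟪e, A e⟫ = L ≠ 0`.
-/

open Filter Topology NNReal
open scoped InnerProductSpace

theorem Dense.cauchySeq_of_equicontinuous {X α : Type*} [TopologicalSpace X]
    [PseudoMetricSpace α] {f : ℕ → X → α} (hf : Equicontinuous f) {s : Set X} (hs : Dense s)
    (h : ∀ y ∈ s, CauchySeq fun n => f n y) (x : X) : CauchySeq fun n => f n x := by
  rw [Metric.cauchySeq_iff]
  intro ε hε
  obtain ⟨y, hys, hxy⟩ :=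
    hs.inter_nhds_nonempty (Metric.equicontinuousAt_iff_right.mp (hf x) (ε / 3) (by positivity))
  obtain ⟨N, hN⟩ := Metric.cauchySeq_iff.mp (h y hys) (ε / 3) (by positivity)
  refine ⟨N, fun m hm n hn => ?_⟩
  calc dist (f m x) (f n x) ≤ dist (f m x) (f m y) + dist (f m y) (f n y) + dist (f n y) (f n x) :=
        dist_triangle4 _ _ _ _
    _ < ε / 3 + ε / 3 + ε / 3 := by
        gcongr
        exacts [hxy m, hN m hm n hn, dist_comm (f n x) (f n y) ▸ hxy n]
    _ = ε := by ring

section SequencesOfLinearMaps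

variable {R 𝕜 E F : Type*} [SeminormedAddCommGroup F]

theorem cauchySeq_apply_of_mem_span [Semiring R] [NormedField 𝕜] [NormedSpace 𝕜 F]
    [AddCommMonoid E] [Module R E] {σ : R →+* 𝕜}
    {f : ℕ → E →ₛₗ[σ] F} {s : Set E} (h : ∀ y ∈ s, CauchySeq fun n => f n y) {x : E}
    (hx : x ∈ Submodule.span R s) : CauchySeq fun n => f n x := by
  induction hx using Submodule.span_induction with
  | mem y hy => exact h y hy
  | zero => simpa using cauchySeq_const (0 : F)
  | add y z _ _ hy hz =>
    simp only [map_add]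
    exact hy.add hz
  | smul c y _ hy =>
    simp only [map_smulₛₗ]
    exact (uniformContinuous_const_smul (σ c)).comp_cauchySeq hy

theorem cauchySeq_apply_of_dense_span [NontriviallyNormedField R] [NontriviallyNormedField 𝕜]
    [NormedSpace 𝕜 F] [SeminormedAddCommGroup E] [NormedSpace R E] {σ : R →+* 𝕜}
    [RingHomIsometric σ] {f : ℕ → E →SL[σ] F} {C : ℝ≥0} (hf : ∀ n, ‖f n‖ ≤ C)
    {s : Set E} (hs : Dense (Submodule.span R s : Set E)) (h : ∀ y ∈ s, CauchySeq fun n => f n y)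
    (x : E) : CauchySeq fun n => f n x :=
  hs.cauchySeq_of_equicontinuous
    (LipschitzWith.uniformEquicontinuous _ C fun n =>
      (f n).lipschitz.weaken (by exact_mod_cast hf n)).equicontinuous
    (fun _ hy => cauchySeq_apply_of_mem_span (f := fun n => (f n : E →ₛₗ[σ] F)) h hy) x

end SequencesOfLinearMaps

section InnerProductSpace

variable {𝕜 E ι : Type*} [RCLike 𝕜] [NormedAddCommGroup E] [InnerProductSpace 𝕜 E]

theorem ContinuousLinearMap.eq_zero_of_inner_apply_eq_zero_of_dense_span {v : ι → E}
    (hv : Dense (Submodule.span 𝕜 (Set.range v) : Set E)) {A : E →L[𝕜] E}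
    (h : ∀ i j, ⟪v i, A (v j)⟫_𝕜 = 0) : A = 0 := by
  have hA : ∀ j, A (v j) = 0 := fun j => by
    have : innerSL 𝕜 (A (v j)) = 0 := ContinuousLinearMap.ext_on hv <| by
      rintro _ ⟨i, rfl⟩
      simpa using inner_eq_zero_symm.mp (h i j)
    simpa using congr($this (A (v j)))
  exact ContinuousLinearMap.ext_on hv <| by
    rintro _ ⟨j, rfl⟩
    simpa using hA j

theorem norm_inner_apply_le_of_opNorm_le {T : E →L[𝕜] E} {C : ℝ} (hT : ‖T‖ ≤ C) (φ χ : E) :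
    ‖⟪φ, T χ⟫_𝕜‖ ≤ C * ‖φ‖ * ‖χ‖ :=
  calc ‖⟪φ, T χ⟫_𝕜‖ ≤ ‖φ‖ * ‖T χ‖ := norm_inner_le_norm _ _
    _ ≤ ‖φ‖ * (C * ‖χ‖) := by gcongr; exact T.le_of_opNorm_le hT χ
    _ = C * ‖φ‖ * ‖χ‖ := by ring

theorem cauchySeq_inner_apply_of_dense_span {T : ℕ → E →L[𝕜] E} {C : ℝ≥0}
    (hT : ∀ n, ‖T n‖ ≤ C) {v : ι → E} (hv : Dense (Submodule.span 𝕜 (Set.range v) : Set E))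
    (h : ∀ i j, CauchySeq fun n => ⟪v i, T n (v j)⟫_𝕜) (φ χ : E) :
    CauchySeq fun n => ⟪φ, T n χ⟫_𝕜 := by
  have hleft (i : ι) (χ : E) : CauchySeq fun n => ⟪v i, T n χ⟫_𝕜 :=
    cauchySeq_apply_of_dense_span (f := fun n => (innerSL 𝕜 (v i)).comp (T n))
      (C := C * ‖v i‖₊) (fun n => ContinuousLinearMap.opNorm_le_bound _ (by positivity)
        fun χ => by simpa using norm_inner_apply_le_of_opNorm_le (hT n) (v i) χ)
      hv (by rintro _ ⟨j, rfl⟩; exact h i j) χ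
  exact cauchySeq_apply_of_dense_span (f := fun n => (innerSL 𝕜).flip (T n χ))
    (C := C * ‖χ‖₊) (fun n => ContinuousLinearMap.opNorm_le_bound _ (by positivity)
      fun φ => by simpa [mul_right_comm] using norm_inner_apply_le_of_opNorm_le (hT n) φ χ)
    hv (by rintro _ ⟨i, rfl⟩; exact hleft i χ) φ

theorem exists_tendsto_inner_apply_of_cauchySeq [CompleteSpace E] {T : ℕ → E →L[𝕜] E} {C : ℝ≥0}
    (hT : ∀ n, ‖T n‖ ≤ C) (h : ∀ φ χ, CauchySeq fun n => ⟪φ, T n χ⟫_𝕜) :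
    ∃ A : E →L[𝕜] E, ∀ φ χ, Tendsto (fun n => ⟪φ, T n χ⟫_𝕜) atTop (𝓝 ⟪φ, A χ⟫_𝕜) := by
  choose F hF using fun φ χ => cauchySeq_tendsto_of_complete (h φ χ)
  let B : E →ₗ⋆[𝕜] E →ₗ[𝕜] 𝕜 := LinearMap.mk₂'ₛₗ (starRingEnd 𝕜) (RingHom.id 𝕜) F
    (fun φ φ' χ => tendsto_nhds_unique (hF _ _) <| by
      simpa only [inner_add_left] using (hF φ χ).add (hF φ' χ))
    (fun c φ χ => tendsto_nhds_unique (hF _ _) <| by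
      simpa only [inner_smul_left, smul_eq_mul] using (hF φ χ).const_mul (starRingEnd 𝕜 c))
    (fun φ χ χ' => tendsto_nhds_unique (hF _ _) <| by
      simpa only [map_add, inner_add_right] using (hF φ χ).add (hF φ χ'))
    (fun c φ χ => tendsto_nhds_unique (hF _ _) <| by
      simpa only [map_smul, inner_smul_right, smul_eq_mul, RingHom.id_apply] using
        (hF φ χ).const_mul c)
  have hB (φ χ : E) : ‖B φ χ‖ ≤ C * ‖φ‖ * ‖χ‖ :=
    le_of_tendsto (hF φ χ).norm <|
      Eventually.of_forall fun n => norm_inner_apply_le_of_opNorm_le (hT n) φ χ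
  refine ⟨(InnerProductSpace.continuousLinearMapOfBilin (B.mkContinuous₂ C hB)).adjoint,
    fun φ χ => ?_⟩
  rw [ContinuousLinearMap.adjoint_inner_right, InnerProductSpace.continuousLinearMapOfBilin_apply]
  exact hF φ χ

end InnerProductSpace

theorem tendsto_of_shift_recurrence {𝕜 : Type*} [NormedField 𝕜] {s : ℤ → ℕ → 𝕜} {r : ℕ → 𝕜}
    {w L : 𝕜} (hr : Tendsto r atTop (𝓝 w)) (hw : w ≠ 0)
    (hs : ∀ m n, s (m + 1) n = r n * s m (n + 1)) (hL : Tendsto (s 0) atTop (𝓝 L)) (m : ℤ) :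
    Tendsto (s m) atTop (𝓝 (w ^ m * L)) := by
  induction m using Int.induction_on with
  | zero => simpa using hL
  | succ m ih =>
    rw [funext (hs m), zpow_add_one₀ hw, mul_comm _ w, mul_assoc]
    exact hr.mul ((tendsto_add_atTop_iff_nat 1).mpr ih)
  | pred m ih =>
    rw [← tendsto_add_atTop_iff_nat 1, zpow_sub_one₀ hw, mul_right_comm, ← div_eq_mul_inv]
    refine (ih.div hr hw).congr' ((hr.eventually_ne hw).mono fun n hn => ?_)
    have hsn := hs (-m - 1) n
    rw [sub_add_cancel] at hsn
    simp only [Pi.div_apply, hsn, mul_div_cancel_left₀ _ hn]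

theorem LinearIsometryEquiv.inner_zpow_apply_pow_zpow_apply {𝕜 E : Type*} [RCLike 𝕜]
    [NormedAddCommGroup E] [InnerProductSpace 𝕜 E] (U : E ≃ₗᵢ[𝕜] E) (a b : ℤ) (n : ℕ) (x y : E) :
    ⟪(U ^ a) x, (U ^ n) ((U ^ b) y)⟫_𝕜 = ⟪x, (U ^ n) ((U ^ (b - a)) y)⟫_𝕜 := by
  have hU : U ^ n * U ^ b = U ^ a * (U ^ n * U ^ (b - a)) := by
    simp only [← zpow_natCast, ← zpow_add]
    congr 1; ring
  have hy : (U ^ n) ((U ^ b) y) = (U ^ a) ((U ^ n) ((U ^ (b - a)) y)) :=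
    show (U ^ n * U ^ b) y = (U ^ a * (U ^ n * U ^ (b - a))) y by rw [hU]
  rw [hy, LinearIsometryEquiv.inner_map_map]

section Unitary

variable {H : Type*} [NormedAddCommGroup H] [InnerProductSpace ℂ H] (U : H ≃ₗᵢ[ℂ] H) (θ : ℕ → ℝ)

noncomputable def phasedPow (n : ℕ) : H →L[ℂ] H :=
  Complex.exp (-(θ n) * Complex.I) • ((U ^ n).toContinuousLinearEquiv : H →L[ℂ] H)

theorem inner_phasedPow_apply (φ χ : H) (n : ℕ) :
    ⟪φ, phasedPow U θ n χ⟫_ℂ = Complex.exp (-(θ n) * Complex.I) * ⟪φ, (U ^ n) χ⟫_ℂ :=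
  inner_smul_right _ _ _

theorem norm_phasedPow_le (n : ℕ) : ‖phasedPow U θ n‖ ≤ 1 :=
  ContinuousLinearMap.opNorm_le_bound _ zero_le_one fun χ => by
    simp [phasedPow, norm_smul, ← Complex.ofReal_neg, Complex.norm_exp_ofReal_mul_I]

theorem norm_exp_sub_mul_I (n : ℕ) : ‖Complex.exp ((θ (n + 1) - θ n) * Complex.I)‖ = 1 := by
  rw [← Complex.ofReal_sub, Complex.norm_exp_ofReal_mul_I]

theorem inner_phasedPow_zpow_add_one (x y : H) (m : ℤ) (n : ℕ) :
    ⟪x, phasedPow U θ n ((U ^ (m + 1)) y)⟫_ℂ =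
      Complex.exp ((θ (n + 1) - θ n) * Complex.I) * ⟪x, phasedPow U θ (n + 1) ((U ^ m) y)⟫_ℂ := by
  have hU : U ^ n * U ^ (m + 1) = U ^ (n + 1) * U ^ m := by
    simp only [← zpow_natCast, ← zpow_add]
    congr 1; push_cast; ring
  have hy : (U ^ n) ((U ^ (m + 1)) y) = (U ^ (n + 1)) ((U ^ m) y) :=
    show (U ^ n * U ^ (m + 1)) y = (U ^ (n + 1) * U ^ m) y by rw [hU]
  rw [inner_phasedPow_apply, inner_phasedPow_apply, hy, ← mul_assoc, ← Complex.exp_add]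
  congr 2; ring

theorem inner_zpow_apply_phasedPow_zpow_apply (x y : H) (a b : ℤ) (n : ℕ) :
    ⟪(U ^ a) x, phasedPow U θ n ((U ^ b) y)⟫_ℂ = ⟪x, phasedPow U θ n ((U ^ (b - a)) y)⟫_ℂ := by
  simp only [inner_phasedPow_apply, LinearIsometryEquiv.inner_zpow_apply_pow_zpow_apply]

variable {e : H}

theorem inner_ne_zero_of_tendsto_inner_phasedPow
    (hcyc : Dense ((Submodule.span ℂ (Set.range fun k : ℤ => (U ^ k) e) : Submodule ℂ H) : Set H))
    {A : H →L[ℂ] H} (hA0 : A ≠ 0)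
    (hA : ∀ φ χ, Tendsto (fun n => ⟪φ, phasedPow U θ n χ⟫_ℂ) atTop (𝓝 ⟪φ, A χ⟫_ℂ)) :
    ⟪e, A e⟫_ℂ ≠ 0 := by
  intro h0
  have hmoments (m : ℤ) :
      Tendsto (fun n => ‖⟪e, phasedPow U θ n ((U ^ m) e)⟫_ℂ‖) atTop (𝓝 0) := by
    simpa using tendsto_of_shift_recurrence
      (s := fun m n => ‖⟪e, phasedPow U θ n ((U ^ m) e)⟫_ℂ‖) (r := fun _ => 1)
      tendsto_const_nhds one_ne_zero
      (fun m n => by rw [inner_phasedPow_zpow_add_one, norm_mul, norm_exp_sub_mul_I])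
      (by simpa [h0] using (hA e e).norm) m
  refine hA0 (A.eq_zero_of_inner_apply_eq_zero_of_dense_span hcyc fun a b =>
    tendsto_nhds_unique (hA _ _) ?_)
  rw [tendsto_zero_iff_norm_tendsto_zero]
  simpa only [inner_zpow_apply_phasedPow_zpow_apply] using hmoments (b - a)

theorem exists_tendsto_exp_sub_of_tendsto_inner_phasedPow {A : H →L[ℂ] H}
    (hA : ∀ φ χ, Tendsto (fun n => ⟪φ, phasedPow U θ n χ⟫_ℂ) atTop (𝓝 ⟪φ, A χ⟫_ℂ))
    (hAe : ⟪e, A e⟫_ℂ ≠ 0) :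
    ∃ w : ℂ, Tendsto (fun n => Complex.exp ((θ (n + 1) - θ n) * Complex.I)) atTop (𝓝 w) := by
  have hden := (tendsto_add_atTop_iff_nat 1).mpr (hA e e)
  refine ⟨_, ((hA e (U e)).div hden hAe).congr' ((hden.eventually_ne hAe).mono fun n hn => ?_)⟩
  have hrec := inner_phasedPow_zpow_add_one U θ e e 0 n
  simp only [zero_add, zpow_one, zpow_zero, LinearIsometryEquiv.coe_one, id] at hrec
  rw [Pi.div_apply, hrec, mul_div_cancel_right₀ _ hn]

theorem exists_tendsto_inner_phasedPow [CompleteSpace H]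
    (hcyc : Dense ((Submodule.span ℂ (Set.range fun k : ℤ => (U ^ k) e) : Submodule ℂ H) : Set H))
    {L w : ℂ} (hL : Tendsto (fun n => ⟪e, phasedPow U θ n e⟫_ℂ) atTop (𝓝 L))
    (hw : Tendsto (fun n => Complex.exp ((θ (n + 1) - θ n) * Complex.I)) atTop (𝓝 w)) :
    ∃ A : H →L[ℂ] H, ∀ φ χ, Tendsto (fun n => ⟪φ, phasedPow U θ n χ⟫_ℂ) atTop (𝓝 ⟪φ, A χ⟫_ℂ) := by
  have hw0 : w ≠ 0 := by
    have : ‖w‖ = 1 := tendsto_nhds_unique hw.norm <| by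
      simpa only [norm_exp_sub_mul_I] using tendsto_const_nhds
    exact norm_ne_zero_iff.mp (this ▸ one_ne_zero)
  have hmoments (m : ℤ) :
      Tendsto (fun n => ⟪e, phasedPow U θ n ((U ^ m) e)⟫_ℂ) atTop (𝓝 (w ^ m * L)) :=
    tendsto_of_shift_recurrence (s := fun m n => ⟪e, phasedPow U θ n ((U ^ m) e)⟫_ℂ) hw hw0
      (inner_phasedPow_zpow_add_one U θ e e) (by simpa using hL) m
  refine exists_tendsto_inner_apply_of_cauchySeq (C := 1) (norm_phasedPow_le U θ)
    (cauchySeq_inner_apply_of_dense_span (C := 1) (norm_phasedPow_le U θ) hcyc fun a b => ?_)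
  simpa only [inner_zpow_apply_phasedPow_zpow_apply] using (hmoments (b - a)).cauchySeq

end Unitary

/-- For a unitary `U` on a complex Hilbert space with cyclic vector `e` and a sequence of
phases `θ_n`: the operators `e^{-iθ_n} U^n` converge in the weak operator topology to a
nonzero limit iff `e^{-iθ_n}⟨e, U^n e⟩` converges to a nonzero limit and
`e^{i(θ_{n+1}-θ_n)}` converges. -/
theorem weak_limit_nonzero_iff_moment_nonzero
    {H : Type*} [NormedAddCommGroup H] [InnerProductSpace ℂ H] [CompleteSpace H]
    (U : H ≃ₗᵢ[ℂ] H) (e : H)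
    (hcyc : Dense ((Submodule.span ℂ (Set.range fun k : ℤ => (U ^ k) e) : Submodule ℂ H) : Set H))
    (θ : ℕ → ℝ) :
    (∃ A : H →L[ℂ] H, A ≠ 0 ∧
        ∀ φ χ : H,
          Tendsto (fun n : ℕ => Complex.exp (-(θ n) * Complex.I) * (inner ℂ φ ((U ^ n) χ) : ℂ))
            atTop (𝓝 (inner ℂ φ (A χ)))) ↔
      ((∃ L : ℂ, L ≠ 0 ∧
          Tendsto (fun n : ℕ => Complex.exp (-(θ n) * Complex.I) * (inner ℂ e ((U ^ n) e) : ℂ))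
            atTop (𝓝 L)) ∧
        ∃ w : ℂ,
          Tendsto (fun n : ℕ => Complex.exp ((θ (n + 1) - θ n) * Complex.I)) atTop (𝓝 w)) := by
  simp only [← inner_phasedPow_apply U θ]
  constructor
  · rintro ⟨A, hA0, hA⟩
    have hAe := inner_ne_zero_of_tendsto_inner_phasedPow U θ hcyc hA0 hA
    exact ⟨⟨_, hAe, hA e e⟩, exists_tendsto_exp_sub_of_tendsto_inner_phasedPow U θ hA hAe⟩
  · rintro ⟨⟨L, hL0, hL⟩, w, hw⟩
    obtain ⟨A, hA⟩ := exists_tendsto_inner_phasedPow U θ hcyc hL hw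
    exact ⟨A, fun h => hL0 (tendsto_nhds_unique hL (by simpa [h] using hA e e)), hA⟩
end

section
/- Let H be a complex Hilbert space, U a unitary operator on H, and e ∈ H a vector such that the linear span of {U^k e : k ∈ ℤ} is dense in H. Suppose that for some sequence (θ_n) of real numbers the operators e^{−iθ_n} U^n converge in the weak operator topology to a nonzero operator U^∞. Then there exists z₀ ∈ ℂ with |z₀| = 1 such that e^{i(θ_{n+1} − θ_n)} → z₀, z₀ is an eigenvalue of U, the operators z₀^{−n} U^n converge in the weak operator topology to the orthogonal projection P onto the eigenspace {v ∈ H : U v = z₀ v}, and lim_{n→∞} z₀^{−n} ⟨e, U^n e⟩ = ‖P e‖² > 0. -/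
open Filter Topology

/-!
Let `A` be the weak limit of `e^{-iθ_n} U^n`. Shifting `n` by one shows that `A` commutes with
`U`, and comparing the limits along `n` and `n + 1` at a matrix entry where `A` is nonzero shows
that the phase ratios converge to some `z₀` with `A U = z₀ A`; hence `U A = z₀ A` and the range of
`A` consists of `z₀`-eigenvectors. For such an eigenvector `v ≠ 0`, `e^{-iθ_n} z₀^n ⟨v, v⟩` is the
sequence converging to `⟨v, A v⟩`, so `e^{-iθ_n} z₀^n` tends to a unimodular `λ` and
`z₀^{-n} U^n → P := λ⁻¹ A` weakly. For `w` in the eigenspace, `z₀^{-n} ⟨w, U^n x⟩ = ⟨w, x⟩` is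
constant, so `x - P x ⊥ w` and `P` is the orthogonal projection. Finally `P (U^k x) = z₀^k P x`, so
if `P e = 0` then `P` vanishes on the dense span of the `U^k e`, contradicting `P ≠ 0`.
-/

open scoped InnerProductSpace

lemma norm_eq_one_of_tendsto {E : Type*} [SeminormedAddCommGroup E] {f : ℕ → E} {x : E}
    (hf : ∀ n, ‖f n‖ = 1) (h : Tendsto f atTop (𝓝 x)) : ‖x‖ = 1 := by
  simpa using (Metric.isClosed_sphere (x := 0) (ε := 1)).mem_of_tendsto h
    (.of_forall fun n => by simp [hf n])

section Unitary

variable {H : Type*} [NormedAddCommGroup H] [InnerProductSpace ℂ H]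
  {U : H ≃ₗᵢ[ℂ] H} {A : H →L[ℂ] H} {z : ℂ}

lemma pow_apply_of_apply_eq_smul {w : H} (hw : U w = z • w) (n : ℕ) :
    (U ^ n) w = z ^ n • w := by
  induction n with
  | zero => simp
  | succ n ih => rw [pow_succ', LinearIsometryEquiv.coe_mul, Function.comp_apply, ih, map_smul,
      hw, smul_smul, pow_succ]

lemma apply_zpow_apply_of_apply_map_eq_smul (hAU : ∀ x, A (U x) = z • A x) (hz : z ≠ 0)
    (k : ℤ) (x : H) : A ((U ^ k) x) = z ^ k • A x := by
  have hAU_inv : ∀ x, A (U⁻¹ x) = z⁻¹ • A x := fun x => by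
    rw [eq_inv_smul_iff₀ hz, ← hAU]
    exact congrArg A (U.apply_symm_apply x)
  induction k using Int.induction_on generalizing x with
  | zero => simp
  | succ k ih => rw [zpow_add_one, LinearIsometryEquiv.coe_mul, Function.comp_apply, ih, hAU,
      smul_smul, zpow_add_one₀ hz]
  | pred k ih => rw [zpow_sub_one, LinearIsometryEquiv.coe_mul, Function.comp_apply, ih,
      hAU_inv, smul_smul, zpow_sub_one₀ hz]

lemma eq_zero_of_apply_map_eq_smul {e : H}
    (hcyc : Dense ((Submodule.span ℂ (Set.range fun k : ℤ => (U ^ k) e) : Submodule ℂ H) : Set H))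
    (hAU : ∀ x, A (U x) = z • A x) (hz : z ≠ 0) (he : A e = 0) : A = 0 :=
  ContinuousLinearMap.ext_on hcyc <| by
    rintro _ ⟨k, rfl⟩
    simp [apply_zpow_apply_of_apply_map_eq_smul hAU hz, he]

def PowWeakTendsto (U : H ≃ₗᵢ[ℂ] H) (c : ℕ → ℂ) (A : H →L[ℂ] H) : Prop :=
  ∀ φ χ : H, Tendsto (fun n => c n * ⟪φ, (U ^ n) χ⟫_ℂ) atTop (𝓝 ⟪φ, A χ⟫_ℂ)

namespace PowWeakTendsto

variable {c : ℕ → ℂ}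

lemma tendsto_pow_succ (h : PowWeakTendsto U c A) (φ χ : H) :
    Tendsto (fun n => c n * ⟪φ, (U ^ (n + 1)) χ⟫_ℂ) atTop (𝓝 ⟪φ, A (U χ)⟫_ℂ) := by
  simpa only [pow_succ, LinearIsometryEquiv.coe_mul, Function.comp_apply] using h φ (U χ)

lemma smul (h : PowWeakTendsto U c A) {d : ℕ → ℂ} {μ : ℂ} (hd : Tendsto d atTop (𝓝 μ)) :
    PowWeakTendsto U (fun n => d n * c n) (μ • A) := fun φ χ => by
  simpa only [mul_assoc, smul_apply, inner_smul_right] using hd.mul (h φ χ)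

lemma exists_tendsto_div_succ (h : PowWeakTendsto U c A) (hA : A ≠ 0) :
    ∃ z, Tendsto (fun n => c n / c (n + 1)) atTop (𝓝 z) := by
  obtain ⟨χ, hχ⟩ := DFunLike.ne_iff.1 hA
  have hL : ⟪A χ, A χ⟫_ℂ ≠ 0 := inner_self_ne_zero.2 hχ
  have hden := (h (A χ) χ).comp (tendsto_add_atTop_nat 1)
  refine ⟨_, ((h.tendsto_pow_succ (A χ) χ).div hden hL).congr' ?_⟩
  filter_upwards [hden.eventually_ne hL] with n hn
  exact mul_div_mul_right _ _ (right_ne_zero_of_mul hn)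

lemma apply_map_eq_smul (h : PowWeakTendsto U c A) (hc : ∀ n, c n ≠ 0)
    (hcz : Tendsto (fun n => c n / c (n + 1)) atTop (𝓝 z)) (χ : H) :
    A (U χ) = z • A χ := by
  refine ext_inner_left ℂ fun φ => ?_
  rw [inner_smul_right]
  refine tendsto_nhds_unique (h.tendsto_pow_succ φ χ) ?_
  refine (hcz.mul ((h φ χ).comp (tendsto_add_atTop_nat 1))).congr fun n => ?_
  rw [Function.comp_apply, ← mul_assoc, div_mul_cancel₀ _ (hc (n + 1))]

lemma map_apply_eq_apply_map (h : PowWeakTendsto U c A) (χ : H) : U (A χ) = A (U χ) := by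
  refine ext_inner_left ℂ fun φ => ?_
  have hadj : ∀ y, ⟪φ, U y⟫_ℂ = ⟪U.symm φ, y⟫_ℂ := fun y => by
    rw [← U.inner_map_map (U.symm φ), U.apply_symm_apply]
  rw [hadj]
  refine tendsto_nhds_unique (h (U.symm φ) χ) ((h.tendsto_pow_succ φ χ).congr fun n => ?_)
  rw [pow_succ', LinearIsometryEquiv.coe_mul, Function.comp_apply, hadj]

lemma tendsto_mul_pow (h : PowWeakTendsto U c A) {v : H} (hv : U v = z • v) (hv0 : v ≠ 0) :
    Tendsto (fun n => c n * z ^ n) atTop (𝓝 (⟪v, A v⟫_ℂ / ⟪v, v⟫_ℂ)) := by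
  have hvv : ⟪v, v⟫_ℂ ≠ 0 := inner_self_ne_zero.2 hv0
  refine ((h v v).div_const _).congr fun n => ?_
  rw [pow_apply_of_apply_eq_smul hv, inner_smul_right, ← mul_assoc, mul_div_cancel_right₀ _ hvv]

lemma exists_zpow_neg (h : PowWeakTendsto U c A) (hc : ∀ n, ‖c n‖ = 1) (hz : ‖z‖ = 1)
    (hcz : Tendsto (fun n => c n / c (n + 1)) atTop (𝓝 z)) (hA : A ≠ 0) :
    ∃ P : H →L[ℂ] H, P ≠ 0 ∧ PowWeakTendsto U (fun n => z ^ (-(n : ℤ))) P := by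
  have hc0 : ∀ n, c n ≠ 0 := fun n => norm_ne_zero_iff.1 (by simp [hc])
  obtain ⟨χ, hχ⟩ := DFunLike.ne_iff.1 hA
  have hv : U (A χ) = z • A χ := by
    rw [h.map_apply_eq_apply_map, h.apply_map_eq_smul hc0 hcz]
  have hlim := h.tendsto_mul_pow hv hχ
  have hlim0 : ⟪A χ, A (A χ)⟫_ℂ / ⟪A χ, A χ⟫_ℂ ≠ 0 := ne_zero_of_norm_ne_zero <| by
    rw [norm_eq_one_of_tendsto (fun n => by simp [hc, hz]) hlim]
    exact one_ne_zero
  refine ⟨_, smul_ne_zero (inv_ne_zero hlim0) hA, ?_⟩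
  convert h.smul (hlim.inv₀ hlim0) using 2 with n
  rw [mul_inv, mul_comm, ← mul_assoc, mul_inv_cancel₀ (hc0 n), one_mul, zpow_neg, zpow_natCast]

variable {P : H →L[ℂ] H}

lemma apply_map_eq_smul_of_zpow_neg (h : PowWeakTendsto U (fun n => z ^ (-(n : ℤ))) P)
    (hz : z ≠ 0) (x : H) : P (U x) = z • P x :=
  h.apply_map_eq_smul (fun n => zpow_ne_zero _ hz) (tendsto_const_nhds.congr fun n => by
    rw [eq_div_iff (zpow_ne_zero _ hz), ← zpow_one_add₀ hz]
    push_cast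
    ring_nf) x

lemma inner_apply_left_of_zpow_neg (h : PowWeakTendsto U (fun n => z ^ (-(n : ℤ))) P)
    (hz : ‖z‖ = 1) {w : H} (hw : U w = z • w) (x : H) : ⟪P x, w⟫_ℂ = ⟪x, w⟫_ℂ := by
  have hconst : ∀ n : ℕ, z ^ (-(n : ℤ)) * ⟪w, (U ^ n) x⟫_ℂ = ⟪w, x⟫_ℂ := fun n => by
    rw [← (U ^ n).inner_map_map w x, pow_apply_of_apply_eq_smul hw, inner_smul_left, map_pow,
      ← Complex.inv_eq_conj hz, zpow_neg, zpow_natCast, inv_pow]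
  have hw_right : ⟪w, P x⟫_ℂ = ⟪w, x⟫_ℂ :=
    tendsto_nhds_unique (h w x) (tendsto_const_nhds.congr fun n => (hconst n).symm)
  rw [← inner_conj_symm, hw_right, inner_conj_symm]

end PowWeakTendsto

end Unitary

theorem weak_limit_is_projection_onto_eigenspace_general
    {H : Type*} [NormedAddCommGroup H] [InnerProductSpace ℂ H]
    (U : H ≃ₗᵢ[ℂ] H) (e : H)
    (hcyc : Dense ((Submodule.span ℂ (Set.range fun k : ℤ => (U ^ k) e) : Submodule ℂ H) : Set H))
    (θ : ℕ → ℝ) (A : H →L[ℂ] H) (hA : A ≠ 0)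
    (hconv : ∀ φ χ : H,
      Tendsto (fun n : ℕ => Complex.exp (-(θ n) * Complex.I) * (inner ℂ φ ((U ^ n) χ) : ℂ))
        atTop (𝓝 (inner ℂ φ (A χ)))) :
    ∃ z₀ : ℂ, ‖z₀‖ = 1 ∧
      Tendsto (fun n : ℕ => Complex.exp ((θ (n + 1) - θ n) * Complex.I)) atTop (𝓝 z₀) ∧
      (∃ v : H, v ≠ 0 ∧ U v = z₀ • v) ∧
      ∃ P : H →L[ℂ] H,
        -- `P` is the orthogonal projection onto the eigenspace `{v | U v = z₀ • v}`:
        (∀ v : H, U (P v) = z₀ • P v) ∧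
        (∀ v w : H, U w = z₀ • w → (inner ℂ (v - P v) w : ℂ) = 0) ∧
        -- `z₀^{-n} U^n → P` in the weak operator topology:
        (∀ φ χ : H,
          Tendsto (fun n : ℕ => z₀ ^ (-(n : ℤ)) * (inner ℂ φ ((U ^ n) χ) : ℂ))
            atTop (𝓝 (inner ℂ φ (P χ)))) ∧
        -- the moments satisfy `z₀^{-n}⟨e, U^n e⟩ → ‖P e‖² > 0`:
        Tendsto (fun n : ℕ => z₀ ^ (-(n : ℤ)) * (inner ℂ e ((U ^ n) e) : ℂ))
          atTop (𝓝 ((‖P e‖ : ℂ) ^ 2)) ∧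
        0 < ‖P e‖ := by
  have hA_lim : PowWeakTendsto U (fun n => Complex.exp (-(θ n) * Complex.I)) A := hconv
  have hc : ∀ n, ‖Complex.exp (-(θ n) * Complex.I)‖ = 1 := fun n => by
    rw [← Complex.ofReal_neg, Complex.norm_exp_ofReal_mul_I]
  have hratio : ∀ n, Complex.exp (-(θ n) * Complex.I) / Complex.exp (-(θ (n + 1)) * Complex.I) =
      Complex.exp ((θ (n + 1) - θ n) * Complex.I) := fun n => by
    rw [← Complex.exp_sub]
    ring_nf
  obtain ⟨z, hz_lim⟩ := hA_lim.exists_tendsto_div_succ hA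
  have hz : ‖z‖ = 1 := norm_eq_one_of_tendsto (fun n => by rw [norm_div, hc, hc, div_one]) hz_lim
  have hz0 : z ≠ 0 := ne_zero_of_norm_ne_zero (by rw [hz]; exact one_ne_zero)
  obtain ⟨P, hP0, hP⟩ := hA_lim.exists_zpow_neg hc hz hz_lim hA
  have hPU := hP.apply_map_eq_smul_of_zpow_neg hz0
  have hUP : ∀ x, U (P x) = z • P x := fun x => by rw [hP.map_apply_eq_apply_map, hPU]
  have hPe : P e ≠ 0 := fun he => hP0 (eq_zero_of_apply_map_eq_smul hcyc hPU hz0 he)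
  have hPP : ∀ x w, U w = z • w → ⟪P x, w⟫_ℂ = ⟪x, w⟫_ℂ :=
    fun x w hw => hP.inner_apply_left_of_zpow_neg hz hw x
  refine ⟨z, hz, hz_lim.congr hratio, ⟨P e, hPe, hUP e⟩, P, hUP,
    fun x w hw => by rw [inner_sub_left, hPP x w hw, sub_self], hP, ?_, norm_pos_iff.2 hPe⟩
  have hmoment : ⟪e, P e⟫_ℂ = (‖P e‖ : ℂ) ^ 2 := by
    rw [← hPP e (P e) (hUP e)]
    exact inner_self_eq_norm_sq_to_K (P e)
  exact hmoment ▸ hP e e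

/-- If for a unitary `U` with cyclic vector `e` the operators `e^{-iθ_n} U^n` converge in the
weak operator topology to a nonzero operator, then there is `z₀` on the unit circle such that
`e^{i(θ_{n+1}-θ_n)} → z₀`, `z₀` is an eigenvalue of `U`, `z₀^{-n} U^n` converges weakly to the
orthogonal projection `P` onto the eigenspace of `z₀`, and `z₀^{-n}⟨e, U^n e⟩ → ‖P e‖² > 0`. -/
theorem weak_limit_is_projection_onto_eigenspace
    {H : Type*} [NormedAddCommGroup H] [InnerProductSpace ℂ H] [CompleteSpace H]
    (U : H ≃ₗᵢ[ℂ] H) (e : H)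
    (hcyc : Dense ((Submodule.span ℂ (Set.range fun k : ℤ => (U ^ k) e) : Submodule ℂ H) : Set H))
    (θ : ℕ → ℝ) (A : H →L[ℂ] H) (hA : A ≠ 0)
    (hconv : ∀ φ χ : H,
      Tendsto (fun n : ℕ => Complex.exp (-(θ n) * Complex.I) * (inner ℂ φ ((U ^ n) χ) : ℂ))
        atTop (𝓝 (inner ℂ φ (A χ)))) :
    ∃ z₀ : ℂ, ‖z₀‖ = 1 ∧
      Tendsto (fun n : ℕ => Complex.exp ((θ (n + 1) - θ n) * Complex.I)) atTop (𝓝 z₀) ∧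
      (∃ v : H, v ≠ 0 ∧ U v = z₀ • v) ∧
      ∃ P : H →L[ℂ] H,
        -- `P` is the orthogonal projection onto the eigenspace `{v | U v = z₀ • v}`:
        (∀ v : H, U (P v) = z₀ • P v) ∧
        (∀ v w : H, U w = z₀ • w → (inner ℂ (v - P v) w : ℂ) = 0) ∧
        -- `z₀^{-n} U^n → P` in the weak operator topology:
        (∀ φ χ : H,
          Tendsto (fun n : ℕ => z₀ ^ (-(n : ℤ)) * (inner ℂ φ ((U ^ n) χ) : ℂ))
            atTop (𝓝 (inner ℂ φ (P χ)))) ∧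
        -- the moments satisfy `z₀^{-n}⟨e, U^n e⟩ → ‖P e‖² > 0`:
        Tendsto (fun n : ℕ => z₀ ^ (-(n : ℤ)) * (inner ℂ e ((U ^ n) e) : ℂ))
          atTop (𝓝 ((‖P e‖ : ℂ) ^ 2)) ∧
        0 < ‖P e‖ :=
  weak_limit_is_projection_onto_eigenspace_general U e hcyc θ A hA hconv
end

section
/- Let μ be a finite positive Borel measure on the unit circle 𝕋 and let f(z) = Σ_{k=p}^{q} a_k z^k (p ≤ q integers, a_k ∈ ℂ) be a Laurent polynomial; set f*(z) = Σ_{k=p}^{q} conj(a_k) z^{−k}. Then there exists a Laurent polynomial L such that for every z ∈ ℂ with 0 < |z| < 1, ∫_𝕋 (t + z)/(t − z) · |f(t)|² dμ(t) = L(z) + f(z) f*(z) · ∫_𝕋 (t + z)/(t − z) dμ(t). In particular, since f(t) f*(t) = |f(t)|² for |t| = 1, the radial boundary values of the Carathéodory function of the measure |f|² dμ lie in L²(dθ/2π) if and only if those of |f(e^{iθ})|² F(e^{iθ}) do, where F is the Carathéodory function of μ. -/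
/-!
On the circle `|f(t)|² = ∑ a_j conj(a_k) t^(j-k)`, so it suffices to show that for each `n : ℤ`
the correction `Φ_n(z) = ∫ K tⁿ dμ - zⁿ ∫ K dμ`, with `K = (t + z) / (t - z)`, is a Laurent
polynomial on the punctured disk. Since `K (t - z) = t + z`, multiplying by `t` gives the
recursion `Φ_{n+1}(z) = z Φ_n(z) + m_{n+1} + z m_n` with the moments `m_n = ∫ tⁿ dμ`, and
`Φ_0 = 0`; as `z ≠ 0`, the recursion can be run in both directions.
-/

open MeasureTheory Set Submodule ComplexConjugate

section LaurentOn

variable {𝕜 : Type*} [Field 𝕜]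

/-- `f ∈ laurentOn U` iff `f` agrees on `U` with some `z ↦ ∑ c_k z ^ k`; the kernel summand
absorbs the values off `U`. -/
def laurentOn (U : Set 𝕜) : Submodule 𝕜 (𝕜 → 𝕜) :=
  span 𝕜 (range fun (k : ℤ) (z : 𝕜) => z ^ k) ⊔ LinearMap.ker (LinearMap.funLeft 𝕜 𝕜 ((↑) : U → 𝕜))

variable {U : Set 𝕜}

theorem mem_laurentOn_of_eqOn {f g : 𝕜 → 𝕜} (hg : g ∈ laurentOn U) (hfg : EqOn f g U) :
    f ∈ laurentOn U := by
  have hker : f - g ∈ LinearMap.ker (LinearMap.funLeft 𝕜 𝕜 ((↑) : U → 𝕜)) := by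
    ext z
    simp [LinearMap.funLeft_apply, hfg z.2]
  simpa using add_mem (show f - g ∈ laurentOn U from mem_sup_right hker) hg

theorem zpow_mem_laurentOn (U : Set 𝕜) (k : ℤ) : (fun z : 𝕜 => z ^ k) ∈ laurentOn U :=
  mem_sup_left (subset_span ⟨k, rfl⟩)

theorem zpow_mul_mem_laurentOn (hU : (0 : 𝕜) ∉ U) (m : ℤ) {f : 𝕜 → 𝕜} (hf : f ∈ laurentOn U) :
    (fun z => z ^ m * f z) ∈ laurentOn U := by
  suffices laurentOn U ≤ (laurentOn U).comap (LinearMap.mulLeft 𝕜 fun z : 𝕜 => z ^ m) from this hf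
  refine sup_le (span_le.mpr ?_) fun g hg => mem_sup_right ?_
  · rintro _ ⟨k, rfl⟩
    refine mem_laurentOn_of_eqOn (zpow_mem_laurentOn U (m + k)) fun z hz => ?_
    have hz0 : z ≠ 0 := ne_of_mem_of_not_mem hz hU
    simp [zpow_add₀ hz0]
  · ext z
    simp [LinearMap.funLeft_apply, show g z = 0 from congr_fun hg z]

theorem mem_laurentOn_iff_of_eqOn_zpow_mul_add (hU : (0 : 𝕜) ∉ U) (m : ℤ) {f g h : 𝕜 → 𝕜}
    (hh : h ∈ laurentOn U) (hfg : EqOn g (fun z => z ^ m * f z + h z) U) :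
    f ∈ laurentOn U ↔ g ∈ laurentOn U := by
  refine ⟨fun hf => mem_laurentOn_of_eqOn (add_mem (zpow_mul_mem_laurentOn hU m hf) hh) hfg,
    fun hg => ?_⟩
  refine mem_laurentOn_of_eqOn (zpow_mul_mem_laurentOn hU (-m) (sub_mem hg hh)) fun z hz => ?_
  have hz0 : z ≠ 0 := ne_of_mem_of_not_mem hz hU
  simp [hfg hz, zpow_neg, inv_mul_cancel_left₀ (zpow_ne_zero m hz0)]

theorem exists_sum_Icc_of_mem_laurentOn {f : 𝕜 → 𝕜} (hf : f ∈ laurentOn U) :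
    ∃ (p q : ℤ) (b : ℤ → 𝕜), ∀ z ∈ U, f z = ∑ k ∈ Finset.Icc p q, b k * z ^ k := by
  obtain ⟨g, hg, r, hr, rfl⟩ := mem_sup.mp hf
  obtain ⟨c, rfl⟩ := Finsupp.mem_span_range_iff_exists_finsupp.mp hg
  set N := c.support.sup Int.natAbs
  have hsupp : c.support ⊆ Finset.Icc (-N : ℤ) N := fun k hk => by
    have := Finset.le_sup (f := Int.natAbs) hk
    rw [Finset.mem_Icc]; omega
  refine ⟨-N, N, c, fun z hz => ?_⟩
  have hr0 : r z = 0 := congr_fun hr ⟨z, hz⟩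
  rw [Pi.add_apply, hr0, add_zero, Finsupp.sum_of_support_subset c hsupp _ (by simp)]
  simp [Finset.sum_apply]

end LaurentOn

theorem sum_mul_sum_zpow_neg {𝕜 : Type*} [Field 𝕜] (s s' : Finset ℤ) (a b : ℤ → 𝕜) {z : 𝕜}
    (hz : z ≠ 0) :
    (∑ j ∈ s, a j * z ^ j) * (∑ k ∈ s', b k * z ^ (-k)) =
      ∑ j ∈ s, ∑ k ∈ s', a j * b k * z ^ (j - k) := by
  rw [Finset.sum_mul_sum]
  refine Finset.sum_congr rfl fun j _ => Finset.sum_congr rfl fun k _ => ?_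
  rw [sub_eq_add_neg, zpow_add₀ hz]
  ring

theorem Complex.ofReal_norm_sum_zpow_sq {t : ℂ} (ht : ‖t‖ = 1) (s : Finset ℤ) (a : ℤ → ℂ) :
    (‖∑ k ∈ s, a k * t ^ k‖ : ℂ) ^ 2 =
      (∑ k ∈ s, a k * t ^ k) * ∑ k ∈ s, conj (a k) * t ^ (-k) := by
  rw [← Complex.mul_conj', map_sum]
  simp_rw [map_mul, map_zpow₀, ← Complex.inv_eq_conj ht, inv_zpow, zpow_neg]

section UnitCircle

variable {μ : Measure ℂ} [IsFiniteMeasure μ]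

theorem integrable_zpow_of_ae_norm_eq_one (hμ : ∀ᵐ t ∂μ, ‖t‖ = 1) (n : ℤ) :
    Integrable (fun t : ℂ => t ^ n) μ := by
  refine .mono' (integrable_const 1) (measurable_id.pow_const n).aestronglyMeasurable ?_
  filter_upwards [hμ] with t ht
  rw [norm_zpow, ht, one_zpow]

theorem integrable_kernel_of_ae_norm_eq_one (hμ : ∀ᵐ t ∂μ, ‖t‖ = 1) {z : ℂ} (hz : ‖z‖ < 1) :
    Integrable (fun t : ℂ => (t + z) / (t - z)) μ := by
  refine .mono' (integrable_const (2 / (1 - ‖z‖)))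
    ((measurable_id.add_const z).div (measurable_id.sub_const z)).aestronglyMeasurable ?_
  filter_upwards [hμ] with t ht
  have hnum : ‖t + z‖ ≤ 2 := by linarith [norm_add_le t z]
  have hden : 1 - ‖z‖ ≤ ‖t - z‖ := by linarith [norm_sub_norm_le t z]
  rw [norm_div]
  exact div_le_div₀ zero_le_two hnum (by linarith) hden

theorem integrable_kernel_mul_zpow_of_ae_norm_eq_one (hμ : ∀ᵐ t ∂μ, ‖t‖ = 1) {z : ℂ}
    (hz : ‖z‖ < 1) (n : ℤ) : Integrable (fun t : ℂ => (t + z) / (t - z) * t ^ n) μ := by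
  refine (integrable_kernel_of_ae_norm_eq_one hμ hz).mul_bdd (c := 1)
    (integrable_zpow_of_ae_norm_eq_one hμ n).aestronglyMeasurable ?_
  filter_upwards [hμ] with t ht
  rw [norm_zpow, ht, one_zpow]

theorem kernel_mul_zpow_add_one {t z : ℂ} (ht : t ≠ 0) (htz : t ≠ z) (n : ℤ) :
    (t + z) / (t - z) * t ^ (n + 1) =
      z * ((t + z) / (t - z) * t ^ n) + (t ^ (n + 1) + z * t ^ n) := by
  have : t - z ≠ 0 := sub_ne_zero.mpr htz
  rw [zpow_add_one₀ ht]
  field_simp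
  ring

variable (μ) in
noncomputable def caratheodoryCorrection (n : ℤ) (z : ℂ) : ℂ :=
  ∫ t, (t + z) / (t - z) * t ^ n ∂μ - z ^ n * ∫ t, (t + z) / (t - z) ∂μ

theorem caratheodoryCorrection_add_one (hμ : ∀ᵐ t ∂μ, ‖t‖ = 1) {z : ℂ} (hz0 : z ≠ 0)
    (hz : ‖z‖ < 1) (n : ℤ) :
    caratheodoryCorrection μ (n + 1) z =
      z * caratheodoryCorrection μ n z + ((∫ t, t ^ (n + 1) ∂μ) + z * ∫ t, t ^ n ∂μ) := by
  have hpt : (fun t : ℂ => (t + z) / (t - z) * t ^ (n + 1)) =ᵐ[μ]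
      fun t => z * ((t + z) / (t - z) * t ^ n) + (t ^ (n + 1) + z * t ^ n) := by
    filter_upwards [hμ] with t ht
    exact kernel_mul_zpow_add_one (by rintro rfl; simp at ht) (by rintro rfl; linarith) n
  have hint := integrable_zpow_of_ae_norm_eq_one hμ
  have hmoments : Integrable (fun t : ℂ => t ^ (n + 1) + z * t ^ n) μ :=
    (hint _).add ((hint n).const_mul z)
  rw [caratheodoryCorrection, caratheodoryCorrection, integral_congr_ae hpt,
    integral_add ((integrable_kernel_mul_zpow_of_ae_norm_eq_one hμ hz n).const_mul z) hmoments,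
    integral_add (hint _) ((hint n).const_mul z), integral_const_mul, integral_const_mul,
    zpow_add_one₀ hz0]
  ring

theorem caratheodoryCorrection_mem_laurentOn (hμ : ∀ᵐ t ∂μ, ‖t‖ = 1) (n : ℤ) :
    caratheodoryCorrection μ n ∈ laurentOn {z : ℂ | 0 < ‖z‖ ∧ ‖z‖ < 1} := by
  have hU : (0 : ℂ) ∉ {z : ℂ | 0 < ‖z‖ ∧ ‖z‖ < 1} := by simp
  have step (n : ℤ) : caratheodoryCorrection μ n ∈ laurentOn {z : ℂ | 0 < ‖z‖ ∧ ‖z‖ < 1} ↔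
      caratheodoryCorrection μ (n + 1) ∈ laurentOn {z : ℂ | 0 < ‖z‖ ∧ ‖z‖ < 1} := by
    refine mem_laurentOn_iff_of_eqOn_zpow_mul_add hU 1
      (add_mem (smul_mem _ (∫ t, t ^ (n + 1) ∂μ) (zpow_mem_laurentOn _ 0))
        (smul_mem _ (∫ t, t ^ n ∂μ) (zpow_mem_laurentOn _ 1))) fun z ⟨hz0, hz⟩ => ?_
    simp [caratheodoryCorrection_add_one hμ (norm_pos_iff.mp hz0) hz, mul_comm]
  induction n using Int.induction_on with
  | zero =>
    convert zero_mem (laurentOn _)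
    ext z
    simp [caratheodoryCorrection]
  | succ n ih => exact (step n).mp ih
  | pred n ih => exact (step (-n - 1)).mpr (by rwa [sub_add_cancel])

theorem integral_kernel_mul_norm_sum_zpow_sq (hμ : ∀ᵐ t ∂μ, ‖t‖ = 1) {z : ℂ} (hz0 : z ≠ 0)
    (hz : ‖z‖ < 1) (s : Finset ℤ) (a : ℤ → ℂ) :
    ∫ t, (t + z) / (t - z) * (‖∑ k ∈ s, a k * t ^ k‖ : ℂ) ^ 2 ∂μ =
      ∑ j ∈ s, ∑ k ∈ s, a j * conj (a k) * caratheodoryCorrection μ (j - k) z +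
        (∑ k ∈ s, a k * z ^ k) * (∑ k ∈ s, conj (a k) * z ^ (-k)) *
          ∫ t, (t + z) / (t - z) ∂μ := by
  have hpt : (fun t : ℂ => (t + z) / (t - z) * (‖∑ k ∈ s, a k * t ^ k‖ : ℂ) ^ 2) =ᵐ[μ]
      fun t => ∑ j ∈ s, ∑ k ∈ s, a j * conj (a k) * ((t + z) / (t - z) * t ^ (j - k)) := by
    filter_upwards [hμ] with t ht
    rw [Complex.ofReal_norm_sum_zpow_sq ht,
      sum_mul_sum_zpow_neg _ _ _ _ (by rintro rfl; simp at ht), Finset.mul_sum]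
    exact Finset.sum_congr rfl fun j _ => by
      rw [Finset.mul_sum]
      exact Finset.sum_congr rfl fun k _ => by ring
  have hint (j k : ℤ) := (integrable_kernel_mul_zpow_of_ae_norm_eq_one hμ hz (j - k)).const_mul
    (a j * conj (a k))
  rw [integral_congr_ae hpt,
    integral_finsetSum _ fun j _ => integrable_finsetSum _ fun k _ => hint j k,
    sum_mul_sum_zpow_neg _ _ _ _ hz0, Finset.sum_mul, ← Finset.sum_add_distrib]
  refine Finset.sum_congr rfl fun j _ => ?_
  rw [integral_finsetSum _ fun k _ => hint j k, Finset.sum_mul, ← Finset.sum_add_distrib]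
  refine Finset.sum_congr rfl fun k _ => ?_
  rw [integral_const_mul, caratheodoryCorrection]
  ring

end UnitCircle

theorem caratheodory_of_polynomial_modification_general
    (μ : Measure ℂ) [IsFiniteMeasure μ] (hsupp : μ {t : ℂ | ‖t‖ ≠ 1} = 0)
    (p q : ℤ) (a : ℤ → ℂ) :
    ∃ (p' q' : ℤ) (b : ℤ → ℂ), ∀ z : ℂ, 0 < ‖z‖ → ‖z‖ < 1 →
      (∫ t, ((t + z) / (t - z)) * ((‖∑ k ∈ Finset.Icc p q, a k * t ^ k‖ : ℂ) ^ 2) ∂μ)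
        = (∑ k ∈ Finset.Icc p' q', b k * z ^ k)
          + (∑ k ∈ Finset.Icc p q, a k * z ^ k) *
              (∑ k ∈ Finset.Icc p q, (starRingEnd ℂ) (a k) * z ^ (-k)) *
              ∫ t, (t + z) / (t - z) ∂μ := by
  have hμ : ∀ᵐ t ∂μ, ‖t‖ = 1 := ae_iff.mpr (by simpa using hsupp)
  have hL : ∑ j ∈ Finset.Icc p q, ∑ k ∈ Finset.Icc p q,
      (a j * conj (a k)) • caratheodoryCorrection μ (j - k) ∈ laurentOn {z | 0 < ‖z‖ ∧ ‖z‖ < 1} :=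
    sum_mem fun j _ => sum_mem fun k _ =>
      smul_mem _ _ (caratheodoryCorrection_mem_laurentOn hμ (j - k))
  obtain ⟨p', q', b, hb⟩ := exists_sum_Icc_of_mem_laurentOn hL
  refine ⟨p', q', b, fun z hz0 hz => ?_⟩
  rw [integral_kernel_mul_norm_sum_zpow_sq hμ (norm_pos_iff.mp hz0) hz, ← hb z ⟨hz0, hz⟩]
  simp

/-- For a finite positive measure `μ` on the unit circle and a Laurent polynomial
`f(z) = Σ_{k=p}^{q} a_k z^k`, with `f*(z) = Σ_{k=p}^{q} conj(a_k) z^{-k}`, there is a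
Laurent polynomial `L` such that for all `0 < |z| < 1`,
`∫ (t+z)/(t-z)·|f(t)|² dμ(t) = L(z) + f(z)·f*(z)·∫ (t+z)/(t-z) dμ(t)`. -/
theorem caratheodory_of_polynomial_modification
    (μ : Measure ℂ) [IsFiniteMeasure μ] (hsupp : μ {t : ℂ | ‖t‖ ≠ 1} = 0)
    (p q : ℤ) (hpq : p ≤ q) (a : ℤ → ℂ) :
    ∃ (p' q' : ℤ) (b : ℤ → ℂ), ∀ z : ℂ, 0 < ‖z‖ → ‖z‖ < 1 →
      (∫ t, ((t + z) / (t - z)) * ((‖∑ k ∈ Finset.Icc p q, a k * t ^ k‖ : ℂ) ^ 2) ∂μ)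
        = (∑ k ∈ Finset.Icc p' q', b k * z ^ k)
          + (∑ k ∈ Finset.Icc p q, a k * z ^ k) *
              (∑ k ∈ Finset.Icc p q, (starRingEnd ℂ) (a k) * z ^ (-k)) *
              ∫ t, (t + z) / (t - z) ∂μ :=
  caratheodory_of_polynomial_modification_general μ hsupp p q a
end

section
/- Let H be a complex Hilbert space, U a unitary operator on H, and e ∈ H. If Σ_{n=1}^∞ |⟨e, U^n e⟩|² < ∞, then for every vector ψ that is a finite linear combination of vectors U^k e with k ∈ ℤ, one also has Σ_{n=1}^∞ |⟨ψ, U^n ψ⟩|² < ∞. -/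
/-!
The autocorrelation `t ↦ ⟪e, U^t e⟫` is square-summable over all of `ℤ`, since
`⟪e, U^(-t) e⟫ = ⟪U^t e, e⟫` is the conjugate of `⟪e, U^t e⟫`. By unitarity every
cross-correlation `n ↦ ⟪U^j e, U^(n+1) U^k e⟫` is a shift of it, hence square-summable, and
since `ℓ²` is a vector space this extends sesquilinearly to all of `span {U^k e}`.
-/

open scoped ENNReal InnerProductSpace

theorem memℓp_two_iff_summable_sq {α : Type*} {E : α → Type*} [∀ i, NormedAddCommGroup (E i)]
    {f : ∀ i, E i} : Memℓp f 2 ↔ Summable fun i => ‖f i‖ ^ 2 := by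
  rw [memℓp_gen_iff (by norm_num)]
  norm_num

section Span

variable {𝕜 E ι : Type*} [RCLike 𝕜] [NormedAddCommGroup E] [InnerProductSpace 𝕜 E] {p : ℝ≥0∞}

theorem memℓp_inner_of_mem_span {s : Set E} (T : ι → E →ₗ[𝕜] E)
    (hs : ∀ x ∈ s, ∀ y ∈ s, Memℓp (fun i => ⟪x, T i y⟫_𝕜) p)
    {φ χ : E} (hφ : φ ∈ Submodule.span 𝕜 s) (hχ : χ ∈ Submodule.span 𝕜 s) :
    Memℓp (fun i => ⟪φ, T i χ⟫_𝕜) p := by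
  have hleft : ∀ x ∈ s, Memℓp (fun i => ⟪x, T i χ⟫_𝕜) p := by
    intro x hx
    induction hχ using Submodule.span_induction with
    | mem y hy => exact hs x hx y hy
    | zero => simpa only [map_zero, inner_zero_right, Pi.zero_def] using zero_memℓp
    | add y z _ _ hy hz => simpa only [map_add, inner_add_right, Pi.add_def] using hy.add hz
    | smul c y _ hy =>
      simpa only [map_smul, inner_smul_right, Pi.smul_def, smul_eq_mul] using hy.const_smul c
  induction hφ using Submodule.span_induction with
  | mem x hx => exact hleft x hx
  | zero => simpa only [inner_zero_left, Pi.zero_def] using zero_memℓp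
  | add y z _ _ hy hz => simpa only [inner_add_left, Pi.add_def] using hy.add hz
  | smul c y _ hy =>
    simpa only [inner_smul_left, Pi.smul_def, smul_eq_mul] using hy.const_smul (starRingEnd 𝕜 c)

end Span

namespace LinearIsometryEquiv

variable {𝕜 E : Type*} [RCLike 𝕜] [NormedAddCommGroup E] [InnerProductSpace 𝕜 E]
  (U : E ≃ₗᵢ[𝕜] E) (x : E)

theorem inner_zpow_apply_zpow_apply_s6 (j k : ℤ) :
    ⟪(U ^ j) x, (U ^ k) x⟫_𝕜 = ⟪x, (U ^ (k - j)) x⟫_𝕜 := by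
  rw [← (U ^ j).inner_map_map x, ← Function.comp_apply (f := ⇑(U ^ j)), ← coe_mul, ← zpow_add,
    add_sub_cancel]

theorem norm_inner_zpow_neg_apply (t : ℤ) : ‖⟪x, (U ^ (-t)) x⟫_𝕜‖ = ‖⟪x, (U ^ t) x⟫_𝕜‖ := by
  have h := U.inner_zpow_apply_zpow_apply_s6 x t 0
  rw [zpow_zero, coe_one, id, zero_sub] at h
  rw [← h, norm_inner_symm]

theorem summable_norm_inner_zpow_apply_sq
    (h : Summable fun n : ℕ => ‖⟪x, (U ^ (n + 1)) x⟫_𝕜‖ ^ 2) :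
    Summable fun t : ℤ => ‖⟪x, (U ^ t) x⟫_𝕜‖ ^ 2 := by
  have hnat : Summable fun n : ℕ => ‖⟪x, (U ^ (n : ℤ)) x⟫_𝕜‖ ^ 2 := by
    rw [← summable_nat_add_iff 1]
    simpa only [zpow_natCast] using h
  exact .of_nat_of_neg hnat (by simpa only [norm_inner_zpow_neg_apply] using hnat)

theorem memℓp_inner_zpow_apply_pow_succ_zpow_apply
    (h : Summable fun n : ℕ => ‖⟪x, (U ^ (n + 1)) x⟫_𝕜‖ ^ 2) (j k : ℤ) :
    Memℓp (fun n : ℕ => ⟪(U ^ j) x, (U ^ (n + 1)) ((U ^ k) x)⟫_𝕜) 2 := by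
  have hshift (n : ℕ) :
      ⟪(U ^ j) x, (U ^ (n + 1)) ((U ^ k) x)⟫_𝕜 = ⟪x, (U ^ ((n : ℤ) + (1 + k - j))) x⟫_𝕜 := by
    rw [← zpow_natCast, ← Function.comp_apply (f := ⇑(U ^ _)), ← coe_mul, ← zpow_add,
      inner_zpow_apply_zpow_apply_s6]
    push_cast
    ring_nf
  simp only [memℓp_two_iff_summable_sq, hshift]
  exact ((U.summable_norm_inner_zpow_apply_sq x h).comp_injective
    (add_left_injective _)).comp_injective Nat.cast_injective

end LinearIsometryEquiv

theorem transient_of_cyclic_transient_general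
    {H : Type*} [NormedAddCommGroup H] [InnerProductSpace ℂ H]
    (U : H ≃ₗᵢ[ℂ] H) (e : H)
    (he : Summable fun n : ℕ => ‖(inner ℂ e ((U ^ (n + 1)) e) : ℂ)‖ ^ 2)
    (ψ : H) (hψ : ψ ∈ Submodule.span ℂ (Set.range fun k : ℤ => (U ^ k) e)) :
    Summable fun n : ℕ => ‖(inner ℂ ψ ((U ^ (n + 1)) ψ) : ℂ)‖ ^ 2 := by
  refine memℓp_two_iff_summable_sq.mp
    (memℓp_inner_of_mem_span (fun n : ℕ => (U ^ (n + 1) : H ≃ₗᵢ[ℂ] H).toLinearMap) ?_ hψ hψ)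
  rintro _ ⟨j, rfl⟩ _ ⟨k, rfl⟩
  exact U.memℓp_inner_zpow_apply_pow_succ_zpow_apply e he j k

/-- If `Σ_{n≥1} |⟨e, U^n e⟩|² < ∞` for a unitary `U` on a complex Hilbert space, then the same
holds for every finite linear combination `ψ` of the vectors `U^k e`, `k ∈ ℤ`. -/
theorem transient_of_cyclic_transient
    {H : Type*} [NormedAddCommGroup H] [InnerProductSpace ℂ H] [CompleteSpace H]
    (U : H ≃ₗᵢ[ℂ] H) (e : H)
    (he : Summable fun n : ℕ => ‖(inner ℂ e ((U ^ (n + 1)) e) : ℂ)‖ ^ 2)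
    (ψ : H) (hψ : ψ ∈ Submodule.span ℂ (Set.range fun k : ℤ => (U ^ k) e)) :
    Summable fun n : ℕ => ‖(inner ℂ ψ ((U ^ (n + 1)) ψ) : ℂ)‖ ^ 2 :=
  transient_of_cyclic_transient_general U e he ψ hψ
end

section
/- Let a ∈ ℂ with |a| < 1, let ρ = √(1 − |a|²), let z ∈ ℂ with z ≠ 0, and set y = (z + z^{−1})/(2ρ). Let T be the 2×2 complex matrix T = ρ^{−1} [[z^{−1}, −a], [−conj(a), z]]. Then for every n ≥ 0, T^n applied to the column vector (1, 1)ᵀ equals the column vector ( U_n(y) − ρ^{−1}(z + a) U_{n−1}(y), U_n(y) − ρ^{−1}(z^{−1} + conj(a)) U_{n−1}(y) )ᵀ, where U_n denotes the Chebyshev polynomials of the second kind with U_{−1} = 0 and U_0 = 1. -/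
/-!
A 2×2 matrix `M` with `det M = 1` and `trace M = 2y` satisfies `M + adj M = 2y` (Cayley–Hamilton),
so its powers obey the Chebyshev recurrence and `M ^ n = U_n(y) - U_{n-1}(y) adj M`. The transfer
matrix `T` has determinant `ρ⁻²(1 - |a|²) = 1` and trace `ρ⁻¹(z + z⁻¹) = 2y`, and
`adj T (1, 1)ᵀ = ρ⁻¹ (z + a, z⁻¹ + conj a)ᵀ`.
-/

/-- Evaluation at `y` of the Chebyshev polynomial of the second kind `U_k`, `k ∈ ℤ`
(with `U_{-1} = 0`, `U_0 = 1`). -/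
noncomputable def chebUeval (y : ℂ) (k : ℤ) : ℂ := (Polynomial.Chebyshev.U ℂ k).eval y

open Matrix Polynomial

theorem Matrix.add_adjugate_fin_two {R : Type*} [CommRing R] (M : Matrix (Fin 2) (Fin 2) R) :
    M + adjugate M = M.trace • 1 := by
  ext i j
  fin_cases i <;> fin_cases j <;> simp [adjugate_fin_two, trace_fin_two, add_comm]

theorem Matrix.pow_eq_chebyshev_U_of_det_eq_one {R : Type*} [CommRing R]
    {M : Matrix (Fin 2) (Fin 2) R} {y : R} (hdet : M.det = 1) (htr : M.trace = 2 * y) (n : ℕ) :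
    M ^ n = (Chebyshev.U R n).eval y • 1 - (Chebyshev.U R ((n : ℤ) - 1)).eval y • adjugate M := by
  induction n with
  | zero => simp
  | succ n ih =>
    have hM : M = (2 * y) • 1 - adjugate M := by
      rw [← htr, ← add_adjugate_fin_two, add_sub_cancel_right]
    calc M ^ (n + 1) = M * M ^ n := pow_succ' M n
      _ = (Chebyshev.U R n).eval y • M - (Chebyshev.U R ((n : ℤ) - 1)).eval y • 1 := by
        rw [ih, mul_sub, mul_smul_comm, mul_smul_comm, mul_adjugate, hdet, one_smul, mul_one]
      _ = _ := by
        nth_rewrite 1 [hM]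
        push_cast
        rw [Chebyshev.U_add_one, add_sub_cancel_right]
        simp only [eval_sub, eval_mul, eval_ofNat, eval_X]
        module

/-- For `|a| < 1`, `ρ = √(1-|a|²)`, `z ≠ 0` and `y = (z + z⁻¹)/(2ρ)`, the `n`-th power of the
transfer matrix `T = ρ⁻¹ [[z⁻¹, -a], [-conj a, z]]` applied to `(1,1)ᵀ` equals
`(U_n(y) - ρ⁻¹(z+a)U_{n-1}(y), U_n(y) - ρ⁻¹(z⁻¹+conj a)U_{n-1}(y))ᵀ`. -/
theorem transfer_matrix_power_eq_chebyshev
    (a : ℂ) (ha : ‖a‖ < 1) (z : ℂ) (hz : z ≠ 0) (n : ℕ) :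
    ((((Real.sqrt (1 - ‖a‖ ^ 2) : ℂ))⁻¹ •
        !![z⁻¹, -a; -(starRingEnd ℂ) a, z]) ^ n).mulVec ![1, 1]
      = ![chebUeval ((z + z⁻¹) / (2 * (Real.sqrt (1 - ‖a‖ ^ 2) : ℂ))) n
            - ((Real.sqrt (1 - ‖a‖ ^ 2) : ℂ))⁻¹ * (z + a) *
              chebUeval ((z + z⁻¹) / (2 * (Real.sqrt (1 - ‖a‖ ^ 2) : ℂ))) ((n : ℤ) - 1),
          chebUeval ((z + z⁻¹) / (2 * (Real.sqrt (1 - ‖a‖ ^ 2) : ℂ))) n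
            - ((Real.sqrt (1 - ‖a‖ ^ 2) : ℂ))⁻¹ * (z⁻¹ + (starRingEnd ℂ) a) *
              chebUeval ((z + z⁻¹) / (2 * (Real.sqrt (1 - ‖a‖ ^ 2) : ℂ))) ((n : ℤ) - 1)] := by
  set ρ : ℂ := (Real.sqrt (1 - ‖a‖ ^ 2) : ℂ)
  have h_pos : 0 < 1 - ‖a‖ ^ 2 := by nlinarith [norm_nonneg a]
  have hρ_sq : ρ ^ 2 = 1 - a * starRingEnd ℂ a := by
    rw [Complex.mul_conj, Complex.normSq_eq_norm_sq, ← Complex.ofReal_pow,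
      Real.sq_sqrt h_pos.le]
    push_cast; ring
  have hρ : ρ ≠ 0 := Complex.ofReal_ne_zero.mpr (Real.sqrt_ne_zero'.mpr h_pos)
  have hdet : (ρ⁻¹ • !![z⁻¹, -a; -(starRingEnd ℂ) a, z]).det = 1 := by
    rw [det_smul, Fintype.card_fin, det_fin_two_of, inv_mul_cancel₀ hz, neg_mul_neg, ← hρ_sq,
      inv_pow, inv_mul_cancel₀ (pow_ne_zero 2 hρ)]
  have htr : (ρ⁻¹ • !![z⁻¹, -a; -(starRingEnd ℂ) a, z]).trace = 2 * ((z + z⁻¹) / (2 * ρ)) := by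
    rw [trace_smul, trace_fin_two_of, smul_eq_mul]
    ring
  rw [pow_eq_chebyshev_U_of_det_eq_one hdet htr, sub_mulVec, smul_mulVec, smul_mulVec,
    adjugate_smul, adjugate_fin_two_of]
  ext i
  fin_cases i <;> simp [chebUeval] <;> ring
end

section
/- Let U be the Hadamard walk unitary on ℓ²(ℤ × {↑,↓}). Then for every k ∈ ℤ, the vectors ψ₁ = e_{k,↓} + e_{k+2,↓} and ψ₂ = e_{k+1,↑} + e_{k+3,↑} satisfy Σ_{n=1}^∞ |⟨ψ_i, U^n ψ_i⟩|² < ∞ for i = 1, 2; that is, the Hadamard quantum random walk on the integers possesses transient states, necessarily involving non-contiguous sites. -/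
/-!
The amplitudes `⟨e_{i,s}, Uⁿ e_{m,t}⟩` are `2^{-n/2}` times integers, and for the two vectors in
question the return amplitude `⟨ψ, U^{n+1} ψ⟩` is `2^{-(n+1)/2}` times an integer combination of
the coefficients `φₙ(a)` of the Lucas sequence `Uₙ(z - z⁻¹, -2)` of Laurent polynomials. These
polynomials satisfy a Chebyshev-type differential equation, whose coefficient form shows that
`(n + 3)` times the return amplitude is a fixed combination of three single amplitudes. Single
amplitudes of a unitary have modulus at most `1`, so the return amplitude is `O(1/n)`, and its
square is summable.
-/

/-- Basis vector `e_{i,s}` of `ℓ²(ℤ × {↑,↓})`, with `true = ↑` and `false = ↓`. -/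
noncomputable def hadamardBasis (i : ℤ) (s : Bool) : lp (fun _ : ℤ × Bool => ℂ) 2 :=
  lp.single 2 (i, s) 1

theorem summable_sq_of_norm_le_div {E : Type*} [SeminormedAddCommGroup E] {f : ℕ → E} {C : ℝ}
    (hf : ∀ n, ‖f n‖ ≤ C / (n + 1)) : Summable fun n => ‖f n‖ ^ 2 := by
  have hmajorant : Summable fun n : ℕ => C ^ 2 * (1 / ((n + 1 : ℕ) : ℝ) ^ 2) :=
    ((summable_nat_add_iff 1).mpr (Real.summable_one_div_nat_pow.mpr one_lt_two)).mul_left _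
  refine hmajorant.of_nonneg_of_le (fun n => by positivity) fun n => ?_
  calc ‖f n‖ ^ 2 ≤ (C / (n + 1)) ^ 2 := pow_le_pow_left₀ (norm_nonneg _) (hf n) 2
    _ = C ^ 2 * (1 / ((n + 1 : ℕ) : ℝ) ^ 2) := by push_cast; rw [div_pow, mul_one_div]

namespace HadamardWalk

/-- `lucasCoeff n a` is the coefficient of `z ^ a` in the Lucas sequence `Uₙ(z - z⁻¹, -2)`:
`U₀ = 0`, `U₁ = 1`, `U_{n+2} = (z - z⁻¹) U_{n+1} + 2 Uₙ`. -/
def lucasCoeff : ℕ → ℤ → ℤ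
  | 0, _ => 0
  | 1, a => if a = 0 then 1 else 0
  | n + 2, a => lucasCoeff (n + 1) (a - 1) - lucasCoeff (n + 1) (a + 1) + 2 * lucasCoeff n a

theorem lucasCoeff_neg : ∀ (n : ℕ) (a : ℤ), lucasCoeff n (-a) = a.negOnePow * lucasCoeff n a
  | 0, a => by simp [lucasCoeff]
  | 1, a => by
    rcases eq_or_ne a 0 with rfl | ha
    · simp [lucasCoeff]
    · simp [lucasCoeff, ha]
  | n + 2, a => by
    rw [lucasCoeff, lucasCoeff, show -a - 1 = -(a + 1) by ring, show -a + 1 = -(a - 1) by ring,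
      lucasCoeff_neg (n + 1), lucasCoeff_neg (n + 1), lucasCoeff_neg n, Int.negOnePow_succ,
      Int.negOnePow_sub, Int.negOnePow_one]
    push_cast
    ring

/-- Writing `Uₙ(z - z⁻¹, -2) = Pₙ(w)` with `w = z - z⁻¹`, this is the coefficient of `z ^ a` in
`(w² + 8) P'_{n+1}(w) = n w P_{n+1}(w) + 4 (n + 1) Pₙ(w)`, multiplied by `z + z⁻¹ = z dw/dz`. -/
theorem lucasCoeff_deriv_identity : ∀ (n : ℕ) (a : ℤ),
    (a - 2) * lucasCoeff (n + 1) (a - 2) + 6 * a * lucasCoeff (n + 1) a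
        + (a + 2) * lucasCoeff (n + 1) (a + 2)
      = n * (lucasCoeff (n + 1) (a - 2) - lucasCoeff (n + 1) (a + 2))
        + 4 * (n + 1) * (lucasCoeff n (a - 1) + lucasCoeff n (a + 1))
  | 0, a => by
    simp only [lucasCoeff]
    split_ifs <;> omega
  | 1, a => by
    simp only [lucasCoeff]
    split_ifs <;> omega
  | n + 2, a => by
    have h₁ := lucasCoeff_deriv_identity (n + 1) (a - 1)
    have h₂ := lucasCoeff_deriv_identity (n + 1) (a + 1)
    have h₃ := lucasCoeff_deriv_identity n a
    simp only [lucasCoeff] at *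
    ring_nf at *
    push_cast at *
    linear_combination h₁ - h₂ + 2 * h₃

def returnCoeff (n : ℕ) : ℤ :=
  4 * (lucasCoeff n 0 + lucasCoeff n 2) - lucasCoeff (n + 1) 1 - lucasCoeff (n + 1) 3

theorem natCast_add_three_mul_returnCoeff (n : ℕ) :
    (n + 3) * returnCoeff n = 8 * (lucasCoeff n 0 + lucasCoeff n 2) + 4 * lucasCoeff (n + 1) 1 := by
  have h := lucasCoeff_deriv_identity n 1
  have hodd : lucasCoeff (n + 1) (-1) = -lucasCoeff (n + 1) 1 := by simp [lucasCoeff_neg]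
  norm_num at h
  rw [returnCoeff]
  linear_combination -h - (n + 1) * hodd

/-- The integer `(√2)ⁿ ⟨e_{m+a,s}, Uⁿ e_{m,t}⟩`; the recursion is `U⁻¹` acting on the bra. -/
def walkAmp (t : Bool) : ℕ → Bool → ℤ → ℤ
  | 0, s, a => if s = t ∧ a = 0 then 1 else 0
  | n + 1, true, a => walkAmp t n true (a - 1) + walkAmp t n false (a - 1)
  | n + 1, false, a => walkAmp t n true (a + 1) - walkAmp t n false (a + 1)

theorem walkAmp_false_succ (n : ℕ) (a : ℤ) :
    walkAmp false (n + 1) true a = lucasCoeff (n + 1) (a - 1) ∧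
      walkAmp false (n + 1) false a = 2 * lucasCoeff n a - lucasCoeff (n + 1) (a + 1) := by
  induction n generalizing a with
  | zero => simp [walkAmp, lucasCoeff]
  | succ n ih =>
    rw [walkAmp.eq_2 _ _ (n + 1), walkAmp.eq_3 _ _ (n + 1), (ih _).1, (ih _).1, (ih _).2,
      (ih _).2, lucasCoeff, lucasCoeff]
    constructor <;> ring_nf

theorem walkAmp_true_succ (n : ℕ) (a : ℤ) :
    walkAmp true (n + 1) true a = lucasCoeff (n + 1) (a - 1) + 2 * lucasCoeff n a ∧
      walkAmp true (n + 1) false a = lucasCoeff (n + 1) (a + 1) := by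
  induction n generalizing a with
  | zero => simp [walkAmp, lucasCoeff]
  | succ n ih =>
    rw [walkAmp.eq_2 _ _ (n + 1), walkAmp.eq_3 _ _ (n + 1), (ih _).1, (ih _).1, (ih _).2,
      (ih _).2, lucasCoeff, lucasCoeff]
    constructor <;> ring_nf

theorem walkAmp_pair_eq_returnCoeff (s : Bool) (n : ℕ) :
    2 * walkAmp s (n + 1) s 0 + walkAmp s (n + 1) s 2 + walkAmp s (n + 1) s (-2)
      = returnCoeff n := by
  have h1 : (1 : ℤ).negOnePow = -1 := Int.negOnePow_one
  have h2 : (2 : ℤ).negOnePow = 1 := Int.negOnePow_even 2 even_two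
  have h3 : (3 : ℤ).negOnePow = -1 := Int.negOnePow_odd 3 ⟨1, rfl⟩
  cases s <;>
    norm_num [walkAmp_false_succ, walkAmp_true_succ, returnCoeff, lucasCoeff_neg, h1, h2, h3] <;>
    ring

end HadamardWalk

open scoped lp InnerProductSpace

theorem inner_hadamardBasis (i j : ℤ) (s t : Bool) :
    ⟪hadamardBasis i s, hadamardBasis j t⟫_ℂ = if s = t ∧ i = j then 1 else 0 := by
  simp [hadamardBasis, lp.inner_single_left, Pi.single_apply, and_comm]

theorem norm_inner_hadamardBasis_map_le_one (V : ℓ²(ℤ × Bool, ℂ) ≃ₗᵢ[ℂ] ℓ²(ℤ × Bool, ℂ))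
    (i m : ℤ) (s t : Bool) : ‖⟪hadamardBasis i s, V (hadamardBasis m t)⟫_ℂ‖ ≤ 1 := by
  refine (norm_inner_le_norm _ _).trans ?_
  simp [hadamardBasis, lp.norm_single]

theorem inv_sqrt_two_mul_self : (√2 : ℂ)⁻¹ * (√2 : ℂ)⁻¹ * 2 = 1 := by
  rw [← mul_inv, ← Complex.ofReal_mul, Real.mul_self_sqrt zero_le_two]
  norm_num

structure IsHadamardWalk (U : ℓ²(ℤ × Bool, ℂ) ≃ₗᵢ[ℂ] ℓ²(ℤ × Bool, ℂ)) : Prop where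
  apply_up : ∀ i : ℤ, U (hadamardBasis i true) =
    (√2 : ℂ)⁻¹ • (hadamardBasis (i + 1) true + hadamardBasis (i - 1) false)
  apply_down : ∀ i : ℤ, U (hadamardBasis i false) =
    (√2 : ℂ)⁻¹ • (hadamardBasis (i + 1) true - hadamardBasis (i - 1) false)

namespace IsHadamardWalk

open HadamardWalk

variable {U : ℓ²(ℤ × Bool, ℂ) ≃ₗᵢ[ℂ] ℓ²(ℤ × Bool, ℂ)} (hU : IsHadamardWalk U)
include hU

theorem symm_apply_up (i : ℤ) :
    U.symm (hadamardBasis i true) =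
      (√2 : ℂ)⁻¹ • (hadamardBasis (i - 1) true + hadamardBasis (i - 1) false) := by
  rw [LinearIsometryEquiv.symm_apply_eq, map_smul, map_add, hU.apply_up, hU.apply_down,
    sub_add_cancel]
  linear_combination (norm := module) (-inv_sqrt_two_mul_self) • hadamardBasis i true

theorem symm_apply_down (i : ℤ) :
    U.symm (hadamardBasis i false) =
      (√2 : ℂ)⁻¹ • (hadamardBasis (i + 1) true - hadamardBasis (i + 1) false) := by
  rw [LinearIsometryEquiv.symm_apply_eq, map_smul, map_sub, hU.apply_up, hU.apply_down,
    add_sub_cancel_right]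
  linear_combination (norm := module) (-inv_sqrt_two_mul_self) • hadamardBasis i false

theorem inner_up_apply (i : ℤ) (y : ℓ²(ℤ × Bool, ℂ)) :
    ⟪hadamardBasis i true, U y⟫_ℂ =
      (√2 : ℂ)⁻¹ * (⟪hadamardBasis (i - 1) true, y⟫_ℂ + ⟪hadamardBasis (i - 1) false, y⟫_ℂ) := by
  rw [← U.symm_symm, ← U.symm.inner_map_eq_flip, hU.symm_apply_up, inner_smul_left,
    inner_add_left, ← Complex.ofReal_inv, Complex.conj_ofReal]

theorem inner_down_apply (i : ℤ) (y : ℓ²(ℤ × Bool, ℂ)) :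
    ⟪hadamardBasis i false, U y⟫_ℂ =
      (√2 : ℂ)⁻¹ * (⟪hadamardBasis (i + 1) true, y⟫_ℂ - ⟪hadamardBasis (i + 1) false, y⟫_ℂ) := by
  rw [← U.symm_symm, ← U.symm.inner_map_eq_flip, hU.symm_apply_down, inner_smul_left,
    inner_sub_left, ← Complex.ofReal_inv, Complex.conj_ofReal]

theorem inner_pow_apply (n : ℕ) (i m : ℤ) (s t : Bool) :
    ⟪hadamardBasis i s, (U ^ n) (hadamardBasis m t)⟫_ℂ =
      (√2 : ℂ)⁻¹ ^ n * walkAmp t n s (i - m) := by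
  induction n generalizing i s with
  | zero => simp [inner_hadamardBasis, walkAmp, sub_eq_zero]
  | succ n ih =>
    rw [pow_succ', LinearIsometryEquiv.coe_mul, Function.comp_apply]
    cases s
    · rw [hU.inner_down_apply, ih, ih, walkAmp, sub_add_eq_add_sub]
      push_cast
      ring
    · rw [hU.inner_up_apply, ih, ih, walkAmp, sub_right_comm]
      push_cast
      ring

theorem abs_walkAmp_le (t : Bool) (n : ℕ) (s : Bool) (a : ℤ) :
    |(walkAmp t n s a : ℝ)| ≤ √2 ^ n := by
  have h := norm_inner_hadamardBasis_map_le_one (U ^ n) a 0 s t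
  rw [hU.inner_pow_apply, sub_zero, norm_mul, norm_pow, norm_inv, Complex.norm_real,
    Complex.norm_intCast, Real.norm_of_nonneg (Real.sqrt_nonneg 2), inv_pow,
    inv_mul_le_iff₀ (by positivity), mul_one] at h
  exact h

theorem abs_lucasCoeff_le (n : ℕ) (a : ℤ) : |(lucasCoeff n a : ℝ)| ≤ √2 ^ n := by
  cases n with
  | zero => simp [lucasCoeff]
  | succ n =>
    simpa [(walkAmp_false_succ n (a + 1)).1] using hU.abs_walkAmp_le false (n + 1) true (a + 1)

theorem abs_returnCoeff_mul_le (n : ℕ) : |(returnCoeff n : ℝ)| * (n + 3) ≤ 20 * √2 ^ (n + 1) := by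
  have hmono : √2 ^ n ≤ √2 ^ (n + 1) :=
    pow_le_pow_right₀ (Real.one_le_sqrt.mpr one_le_two) n.le_succ
  have hid := natCast_add_three_mul_returnCoeff n
  have h₀ := hU.abs_lucasCoeff_le n 0
  have h₂ := hU.abs_lucasCoeff_le n 2
  have h₁ := hU.abs_lucasCoeff_le (n + 1) 1
  calc |(returnCoeff n : ℝ)| * (n + 3)
      = |8 * ((lucasCoeff n 0 : ℝ) + lucasCoeff n 2) + 4 * lucasCoeff (n + 1) 1| := by
        rw [← abs_of_pos (by positivity : (0 : ℝ) < n + 3), ← abs_mul, mul_comm]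
        exact_mod_cast congrArg abs hid
    _ ≤ 20 * √2 ^ (n + 1) := by
        rw [abs_le] at h₀ h₂ h₁ ⊢
        constructor <;> linarith [h₀.1, h₀.2, h₂.1, h₂.2, h₁.1, h₁.2]

theorem inner_pow_succ_pair (s : Bool) (n : ℕ) (k : ℤ) :
    ⟪hadamardBasis k s + hadamardBasis (k + 2) s,
        (U ^ (n + 1)) (hadamardBasis k s + hadamardBasis (k + 2) s)⟫_ℂ
      = (√2 : ℂ)⁻¹ ^ (n + 1) * returnCoeff n := by
  rw [map_add, inner_add_left, inner_add_right, inner_add_right, hU.inner_pow_apply,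
    hU.inner_pow_apply, hU.inner_pow_apply, hU.inner_pow_apply, ← walkAmp_pair_eq_returnCoeff s n]
  simp only [sub_self, sub_add_cancel_left, add_sub_cancel_left]
  push_cast
  ring

theorem norm_inner_pow_succ_pair_le (s : Bool) (n : ℕ) (k : ℤ) :
    ‖⟪hadamardBasis k s + hadamardBasis (k + 2) s,
        (U ^ (n + 1)) (hadamardBasis k s + hadamardBasis (k + 2) s)⟫_ℂ‖ ≤ 20 / (n + 1) := by
  have h := hU.abs_returnCoeff_mul_le n
  rw [hU.inner_pow_succ_pair, norm_mul, norm_pow, norm_inv, Complex.norm_real,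
    Complex.norm_intCast, Real.norm_of_nonneg (Real.sqrt_nonneg 2), inv_pow, inv_mul_eq_div,
    div_le_div_iff₀ (by positivity) (by positivity)]
  nlinarith [abs_nonneg (returnCoeff n : ℝ)]

end IsHadamardWalk

/-- The Hadamard walk on the integers possesses transient states involving non-contiguous
sites: for every `k`, the vectors `ψ₁ = e_{k,↓} + e_{k+2,↓}` and `ψ₂ = e_{k+1,↑} + e_{k+3,↑}`
satisfy `Σ_{n≥1} |⟨ψᵢ, U^n ψᵢ⟩|² < ∞`. -/
theorem hadamard_walk_transient_states
    (U : lp (fun _ : ℤ × Bool => ℂ) 2 ≃ₗᵢ[ℂ] lp (fun _ : ℤ × Bool => ℂ) 2)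
    (hUup : ∀ i : ℤ, U (hadamardBasis i true) =
      ((Real.sqrt 2 : ℂ))⁻¹ • (hadamardBasis (i + 1) true + hadamardBasis (i - 1) false))
    (hUdown : ∀ i : ℤ, U (hadamardBasis i false) =
      ((Real.sqrt 2 : ℂ))⁻¹ • (hadamardBasis (i + 1) true - hadamardBasis (i - 1) false))
    (k : ℤ) :
    Summable (fun n : ℕ =>
      ‖(inner ℂ (hadamardBasis k false + hadamardBasis (k + 2) false)
          ((U ^ (n + 1)) (hadamardBasis k false + hadamardBasis (k + 2) false)) : ℂ)‖ ^ 2) ∧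
    Summable (fun n : ℕ =>
      ‖(inner ℂ (hadamardBasis (k + 1) true + hadamardBasis (k + 3) true)
          ((U ^ (n + 1)) (hadamardBasis (k + 1) true + hadamardBasis (k + 3) true)) : ℂ)‖ ^ 2) := by
  have hU : IsHadamardWalk U := ⟨hUup, hUdown⟩
  refine ⟨summable_sq_of_norm_le_div (hU.norm_inner_pow_succ_pair_le false · k), ?_⟩
  rw [show k + 3 = k + 1 + 2 by ring]
  exact summable_sq_of_norm_le_div (hU.norm_inner_pow_succ_pair_le true · (k + 1))
end
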